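/- Define f : ℝ² × ℝ² × ℝ^{2×2} → ℝ by f(α, β, M) = |(m₁₂ − α₁β₂) − (m₂₁ − α₂β₁)|². Then f is Λ-convex: for every V = (α, β, M) and every W ∈ Λ, the function t ↦ f(V + tW) is convex on ℝ. In fact, t ↦ f(V + tW) is a polynomial of degree at most 2 in t with nonnegative leading coefficient. -/

import Mathlib

/-!
Write `f = g²` with `g(α, β, M) = (m₁₂ - m₂₁) - (α₁β₂ - α₂β₁)`. Along a line `V + tW` the only
quadratic term of `g` is `-t² (α_W ∧ β_W)`, and for `W ∈ Λ` both `α_W` and `β_W` are orthogonal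
to the nonzero vector `ξ` of the plane, so this wedge vanishes. Hence `g(V + tW)` is affine in `t`
and `f(V + tW)` is the square of an affine function.
-/

open Matrix

/-- The 2D state space: `(z⁺, z⁻, M)`. -/
abbrev MHD2State := (Fin 2 → ℝ) × (Fin 2 → ℝ) × Matrix (Fin 2) (Fin 2) ℝ

/-- The 2D MHD wave cone. -/
def Lambda2 : Set MHD2State :=
  {p | ∃ ξ : Fin 2 → ℝ, ξ ≠ 0 ∧ ∃ c : ℝ,
    p.2.2 *ᵥ ξ + c • p.1 = 0 ∧ p.2.2ᵀ *ᵥ ξ + c • p.2.1 = 0 ∧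
    p.1 ⬝ᵥ ξ = 0 ∧ p.2.1 ⬝ᵥ ξ = 0}

/-- The function `f(α,β,M) = |(m₁₂ − α₁β₂) − (m₂₁ − α₂β₁)|²`. -/
noncomputable def fConv (p : MHD2State) : ℝ :=
  |(p.2.2 0 1 - p.1 0 * p.2.1 1) - (p.2.2 1 0 - p.1 1 * p.2.1 0)| ^ 2

open Set

theorem convexOn_univ_quadratic {a : ℝ} (ha : 0 ≤ a) (b c : ℝ) :
    ConvexOn ℝ univ fun t : ℝ => a * t ^ 2 + b * t + c :=
  ((((Even.convexOn_pow even_two).smul ha).add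
    ((LinearMap.mulLeft ℝ b).convexOn convex_univ)).add_const c)

theorem Matrix.det_eq_zero_of_rows_dotProduct_eq_zero {n K : Type*} [Fintype n] [DecidableEq n]
    [Field K] {A : Matrix n n K} {ξ : n → K} (hξ : ξ ≠ 0) (h : ∀ i, A i ⬝ᵥ ξ = 0) :
    A.det = 0 :=
  exists_mulVec_eq_zero_iff.mp ⟨ξ, hξ, funext h⟩

theorem Lambda2.wedge_eq_zero {W : MHD2State} (hW : W ∈ Lambda2) :
    W.1 0 * W.2.1 1 - W.1 1 * W.2.1 0 = 0 := by
  obtain ⟨ξ, hξ, -, -, -, hα, hβ⟩ := hW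
  have h := det_eq_zero_of_rows_dotProduct_eq_zero (A := of ![W.1, W.2.1]) hξ
    (Fin.forall_fin_two.mpr ⟨hα, hβ⟩)
  simpa [det_fin_two] using h

def skewDefect (p : MHD2State) : ℝ :=
  (p.2.2 0 1 - p.2.2 1 0) - (p.1 0 * p.2.1 1 - p.1 1 * p.2.1 0)

theorem fConv_eq_skewDefect_sq (p : MHD2State) : fConv p = skewDefect p ^ 2 := by
  rw [fConv, skewDefect, sq_abs]
  ring

theorem skewDefect_add_smul (V W : MHD2State) (t : ℝ) :
    skewDefect (V + t • W) = skewDefect V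
      + t * (W.2.2 0 1 - W.2.2 1 0
        - (V.1 0 * W.2.1 1 + W.1 0 * V.2.1 1 - V.1 1 * W.2.1 0 - W.1 1 * V.2.1 0))
      - t ^ 2 * (W.1 0 * W.2.1 1 - W.1 1 * W.2.1 0) := by
  simp only [skewDefect, Prod.fst_add, Prod.snd_add, Prod.smul_fst, Prod.smul_snd,
    Pi.add_apply, Pi.smul_apply, Matrix.add_apply, Matrix.smul_apply, smul_eq_mul]
  ring

theorem exists_skewDefect_add_smul_eq_of_mem_Lambda2 (V : MHD2State) {W : MHD2State}
    (hW : W ∈ Lambda2) : ∃ b : ℝ, ∀ t : ℝ, skewDefect (V + t • W) = skewDefect V + b * t :=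
  ⟨W.2.2 0 1 - W.2.2 1 0
      - (V.1 0 * W.2.1 1 + W.1 0 * V.2.1 1 - V.1 1 * W.2.1 0 - W.1 1 * V.2.1 0), fun t => by
    rw [skewDefect_add_smul, Lambda2.wedge_eq_zero hW]
    ring⟩

/-- `fConv` is `Λ`-convex; in fact `t ↦ f(V + tW)` is a quadratic polynomial
with nonnegative leading coefficient for every `W ∈ Λ`. -/
theorem stmt7 (V W : MHD2State) (hW : W ∈ Lambda2) :
    ConvexOn ℝ (Set.univ : Set ℝ) (fun t : ℝ => fConv (V + t • W)) ∧
    ∃ a b c : ℝ, 0 ≤ a ∧ ∀ t : ℝ, fConv (V + t • W) = a * t ^ 2 + b * t + c := by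
  obtain ⟨b, hline⟩ := exists_skewDefect_add_smul_eq_of_mem_Lambda2 V hW
  have hquad : ∃ a b c : ℝ, 0 ≤ a ∧ ∀ t : ℝ, fConv (V + t • W) = a * t ^ 2 + b * t + c :=
    ⟨b ^ 2, 2 * skewDefect V * b, skewDefect V ^ 2, sq_nonneg b, fun t => by
      rw [fConv_eq_skewDefect_sq, hline]
      ring⟩
  refine ⟨?_, hquad⟩
  obtain ⟨a, b, c, ha, hf⟩ := hquad
  exact (convexOn_univ_quadratic ha b c).congr fun t _ => (hf t).symm
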